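/- arXiv:1904.03810 — 4 statements merged into one kernel-verified Lean document; each statement's English description precedes it below -/
import Mathlib

section
/- For every real number u > 0 with u ≠ 1 and every non-negative integer m, the improper integral ∫₀^∞ xᵐ/((x+1)^{m+1} (xu+1)) dx converges and equals (-1)^m (u-1)^{-(m+1)} (log u - ∑_{j=1}^m (-1)^{j+1} (u-1)^j / j). -/
/-!
Writing `L m u` for the integral, the partial fraction
`1 / (x + 1) - 1 / (x u + 1) = x (u - 1) / ((x + 1) (x u + 1))` gives the recursion
`L (m + 1) u = (L m 1 - L m u) / (u - 1)`. Both `L 0 u = log u / (u - 1)` and `L m 1 = 1 / (m + 1)`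
have explicit antiderivatives, `(log (x u + 1) - log (x + 1)) / (u - 1)` and
`(x / (x + 1)) ^ (m + 1) / (m + 1)`, and the closed form satisfies the same recursion.
-/

open MeasureTheory Set Filter Topology

namespace ModifiedLog

noncomputable def integrand (m : ℕ) (u x : ℝ) : ℝ :=
  x ^ m / ((x + 1) ^ (m + 1) * (x * u + 1))

noncomputable def modifiedLog (m : ℕ) (u : ℝ) : ℝ :=
  ∫ x in Ioi 0, integrand m u x

/-- The remainder of the Taylor expansion of `log` at `1` after the term of degree `m`. -/
noncomputable def logRemainder (m : ℕ) (u : ℝ) : ℝ :=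
  Real.log u - ∑ j ∈ Finset.Icc 1 m, (-1 : ℝ) ^ (j + 1) * (u - 1) ^ j / j

lemma integrand_le {m : ℕ} {u x : ℝ} (hu : 0 < u) (hx : 0 < x) :
    integrand m u x ≤ (min u 1)⁻¹ * (1 + x ^ 2)⁻¹ := by
  have hc : 0 < min u 1 := lt_min hu one_pos
  have hxm : x ^ m ≤ (x + 1) ^ m := pow_le_pow_left₀ hx.le (by linarith) m
  have hquad : min u 1 * (1 + x ^ 2) ≤ (x + 1) * (x * u + 1) := by
    nlinarith [min_le_left u 1, min_le_right u 1]
  rw [integrand, ← mul_inv, div_le_iff₀ (by positivity), inv_mul_eq_div,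
    le_div_iff₀ (by positivity)]
  calc x ^ m * (min u 1 * (1 + x ^ 2)) ≤ (x + 1) ^ m * ((x + 1) * (x * u + 1)) := by
        gcongr
    _ = (x + 1) ^ (m + 1) * (x * u + 1) := by ring

lemma integrableOn_integrand (m : ℕ) {u : ℝ} (hu : 0 < u) :
    IntegrableOn (integrand m u) (Ioi 0) := by
  refine Integrable.mono' (integrable_inv_one_add_sq.const_mul (min u 1)⁻¹).integrableOn ?_ ?_
  · refine ContinuousOn.aestronglyMeasurable (ContinuousOn.div (by fun_prop) (by fun_prop) ?_)
      measurableSet_Ioi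
    intro x (hx : 0 < x)
    positivity
  · filter_upwards [ae_restrict_mem measurableSet_Ioi] with x (hx : 0 < x)
    rw [Real.norm_eq_abs, abs_of_nonneg (by unfold integrand; positivity)]
    exact integrand_le hu hx

lemma integrand_succ (m : ℕ) {u x : ℝ} (hu1 : u ≠ 1) (hx : x + 1 ≠ 0)
    (hxu : x * u + 1 ≠ 0) :
    integrand (m + 1) u x = (integrand m 1 x - integrand m u x) / (u - 1) := by
  have : u - 1 ≠ 0 := sub_ne_zero.2 hu1
  simp only [integrand]
  field_simp
  ring

lemma modifiedLog_succ (m : ℕ) {u : ℝ} (hu : 0 < u) (hu1 : u ≠ 1) :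
    modifiedLog (m + 1) u = (modifiedLog m 1 - modifiedLog m u) / (u - 1) := by
  have hEq : EqOn (integrand (m + 1) u) (fun x => (integrand m 1 x - integrand m u x) / (u - 1))
      (Ioi 0) := fun x (hx : 0 < x) => integrand_succ m hu1 (by positivity) (by positivity)
  rw [modifiedLog, setIntegral_congr_fun measurableSet_Ioi hEq, integral_div,
    integral_sub (integrableOn_integrand m one_pos) (integrableOn_integrand m hu)]
  rfl

lemma tendsto_mul_add_div_add_one (u v : ℝ) :
    Tendsto (fun x : ℝ => (x * u + v) / (x + 1)) atTop (𝓝 u) := by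
  have hinv : Tendsto (fun x : ℝ => (x + 1)⁻¹) atTop (𝓝 0) :=
    tendsto_inv_atTop_zero.comp (tendsto_atTop_add_const_right atTop 1 tendsto_id)
  have hlim : Tendsto (fun x : ℝ => u + (v - u) * (x + 1)⁻¹) atTop (𝓝 u) := by
    simpa using (hinv.const_mul (v - u)).const_add u
  refine hlim.congr' ?_
  filter_upwards [eventually_gt_atTop 0] with x (hx : 0 < x)
  field_simp
  ring

lemma modifiedLog_zero {u : ℝ} (hu : 0 < u) (hu1 : u ≠ 1) :
    modifiedLog 0 u = Real.log u / (u - 1) := by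
  have hderiv : ∀ x ∈ Ici (0 : ℝ),
      HasDerivAt (fun x => (Real.log (x * u + 1) - Real.log (x + 1)) / (u - 1))
        (integrand 0 u x) x := by
    intro x (hx : 0 ≤ x)
    have h1 : 0 < x + 1 := by positivity
    have h2 : 0 < x * u + 1 := by positivity
    have hd1 := (((hasDerivAt_id x).mul_const u).add_const 1).log h2.ne'
    have hd2 := ((hasDerivAt_id x).add_const 1).log h1.ne'
    refine ((hd1.sub hd2).div_const (u - 1)).congr_deriv ?_
    have : u - 1 ≠ 0 := sub_ne_zero.2 hu1
    simp only [integrand, id]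
    field_simp
    ring
  have hlim : Tendsto (fun x => (Real.log (x * u + 1) - Real.log (x + 1)) / (u - 1)) atTop
      (𝓝 (Real.log u / (u - 1))) := by
    refine (((Real.continuousAt_log hu.ne').tendsto.comp
      (tendsto_mul_add_div_add_one u 1)).congr' ?_).div_const (u - 1)
    filter_upwards [eventually_gt_atTop 0] with x (hx : 0 < x)
    exact Real.log_div (by positivity) (by positivity)
  rw [modifiedLog, integral_Ioi_of_hasDerivAt_of_tendsto' hderiv (integrableOn_integrand 0 hu) hlim]
  simp

lemma modifiedLog_one (m : ℕ) : modifiedLog m 1 = 1 / (m + 1) := by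
  have hderiv : ∀ x ∈ Ici (0 : ℝ),
      HasDerivAt (fun x : ℝ => (x / (x + 1)) ^ (m + 1) / (m + 1)) (integrand m 1 x) x := by
    intro x (hx : 0 ≤ x)
    have h1 : x + 1 ≠ 0 := by positivity
    refine ((((hasDerivAt_id x).div ((hasDerivAt_id x).add_const 1) h1).pow (m + 1)).div_const
      (m + 1)).congr_deriv ?_
    simp only [integrand, Pi.div_apply, id, Nat.add_sub_cancel, Nat.cast_add, Nat.cast_one, div_pow]
    field_simp
    ring
  have hlim : Tendsto (fun x : ℝ => (x / (x + 1)) ^ (m + 1) / (m + 1)) atTop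
      (𝓝 (1 / (m + 1))) := by
    simpa using ((tendsto_mul_add_div_add_one 1 0).pow (m + 1)).div_const ((m : ℝ) + 1)
  rw [modifiedLog, integral_Ioi_of_hasDerivAt_of_tendsto' hderiv (integrableOn_integrand m one_pos)
    hlim]
  simp

lemma logRemainder_succ (m : ℕ) (u : ℝ) :
    logRemainder (m + 1) u = logRemainder m u - (-1) ^ m * (u - 1) ^ (m + 1) / (m + 1) := by
  rw [logRemainder, logRemainder, Finset.sum_Icc_succ_top (Nat.le_add_left 1 m)]
  push_cast
  ring

lemma modifiedLog_eq_logRemainder (m : ℕ) {u : ℝ} (hu : 0 < u) (hu1 : u ≠ 1) :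
    modifiedLog m u = (-1) ^ m * ((u - 1) ^ (m + 1))⁻¹ * logRemainder m u := by
  have hu1' : u - 1 ≠ 0 := sub_ne_zero.2 hu1
  induction m with
  | zero => simp [modifiedLog_zero hu hu1, logRemainder, div_eq_inv_mul]
  | succ m ih =>
    have hsign : (-1 : ℝ) ^ m * (-1) ^ m = 1 := by rw [← mul_pow]; norm_num
    rw [modifiedLog_succ m hu hu1, modifiedLog_one, ih, logRemainder_succ]
    field_simp
    linear_combination -(u - 1) ^ (m + 1) * (u - 1) ^ (m + 2) * hsign

end ModifiedLog

theorem modified_log_integral (u : ℝ) (hu : 0 < u) (hu1 : u ≠ 1) (m : ℕ) :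
    IntegrableOn (fun x : ℝ => x ^ m / ((x + 1) ^ (m + 1) * (x * u + 1))) (Ioi 0) ∧
    ∫ x in Ioi (0:ℝ), x ^ m / ((x + 1) ^ (m + 1) * (x * u + 1)) =
      (-1 : ℝ) ^ m * ((u - 1) ^ (m + 1))⁻¹ *
        (Real.log u - ∑ j ∈ Finset.Icc 1 m, (-1 : ℝ) ^ (j + 1) * (u - 1) ^ j / j) :=
  ⟨ModifiedLog.integrableOn_integrand m hu, ModifiedLog.modifiedLog_eq_logRemainder m hu hu1⟩
end

section
/- Let A be a unital Banach algebra, e an idempotent and k invertible such that 1 + u·ek² is invertible for all u ≥ 0. Then 1 + u·ek²e is also invertible for all u ≥ 0, and (e k² e·u + 1)⁻¹ = 1 − e + (e k² u + 1)⁻¹ e. -/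
theorem compressed_resolvent_identity {A : Type*} [NormedRing A] [NormedAlgebra ℝ A]
    [CompleteSpace A] (e k : A) (he : e * e = e) (hk : IsUnit k)
    (h : ∀ u : ℝ, 0 ≤ u → IsUnit (1 + u • (e * k ^ 2))) :
    ∀ u : ℝ, 0 ≤ u →
      IsUnit (1 + u • (e * k ^ 2 * e)) ∧
      Ring.inverse (u • (e * k ^ 2 * e) + 1)
        = 1 - e + Ring.inverse (u • (e * k ^ 2) + 1) * e := by
  intro u hu
  set x := e * k ^ 2 with hx
  have hxu := h u hu
  set r := Ring.inverse (1 + u • x) with hr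
  have hr1 : (1 + u • x) * r = 1 := Ring.mul_inverse_cancel _ hxu
  have hr2 : r * (1 + u • x) = 1 := Ring.inverse_mul_cancel _ hxu
  have hex : e * x = x := by rw [hx, ← mul_assoc, he]
  have h1e : (1 - e) * x = 0 := by rw [sub_mul, one_mul, hex, sub_self]
  have hrsolve : r = 1 - u • (x * r) := by
    have := hr1
    rw [add_mul, one_mul, smul_mul_assoc] at this
    linear_combination (norm := noncomm_ring) this
  have key : (1 - e) * r = 1 - e := by
    rw [hrsolve, mul_sub, mul_smul_comm, ← mul_assoc, h1e, zero_mul, smul_zero,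
      sub_zero, mul_one]
  have hre : e * (r * e) = r * e := by
    have h0 : (1 - e) * (r * e) = 0 := by
      rw [← mul_assoc, key, sub_mul, one_mul, he, sub_self]
    have := h0
    rw [sub_mul, one_mul] at this
    linear_combination (norm := noncomm_ring) -this
  set b := 1 - e + r * e with hb
  have hleft : (1 + u • (x * e)) * b = 1 := by
    have hxeb : (x * e) * b = x * (r * e) := by
      have heb : e * b = r * e := by
        rw [hb, mul_add, mul_sub, mul_one, he, sub_self, zero_add, hre]
      rw [mul_assoc, heb]
    have hfin : (1 + u • x) * (r * e) = e := by
      rw [← mul_assoc, hr1, one_mul]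
    rw [add_mul, one_mul, smul_mul_assoc, hxeb, hb]
    rw [add_mul, one_mul, smul_mul_assoc] at hfin
    linear_combination (norm := noncomm_ring) hfin
  have hright : b * (1 + u • (x * e)) = 1 := by
    have hbxe : b * (x * e) = r * (x * e) := by
      rw [hb, add_mul, ← mul_assoc, h1e, zero_mul, zero_add, mul_assoc,
        ← mul_assoc e x e, hex]
    have hfin : r * ((1 + u • x) * e) = e := by
      rw [← mul_assoc, hr2, one_mul]
    rw [mul_add, mul_one, mul_smul_comm, hbxe, hb]
    rw [add_mul, one_mul, smul_mul_assoc, mul_add, mul_smul_comm] at hfin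
    linear_combination (norm := noncomm_ring) hfin
  have hunit : IsUnit (1 + u • (x * e)) :=
    ⟨⟨1 + u • (x * e), b, hleft, hright⟩, rfl⟩
  refine ⟨hunit, ?_⟩
  rw [add_comm (u • (x * e)) 1, add_comm (u • x) 1]
  have : Ring.inverse ((⟨1 + u • (x * e), b, hleft, hright⟩ : Aˣ) : A) = b :=
    Ring.inverse_unit _
  simpa using this
end

section
/- Let f(z) = ∑_{n≥0} fₙ zⁿ and g(z) = ∑_{n≥0} gₙ zⁿ be power series with radii of convergence R_f, R_g > 0, and let 0 < r < R_f, |z| < r·R_g. Then the Hadamard product (f ⊙ g)(z) := ∑_{n≥0} fₙ gₙ zⁿ converges and equals (1/(2πi)) ∮_{|w|=r} f(w) g(z/w) dw/w. -/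
/-!
On the circle `‖w‖ = r` both `f(w)` and `g(z/w)` converge absolutely, so the integrand
`f(w) g(z/w) / w` is the double series `∑ fₘ gₙ zⁿ w^(m-n-1)`, whose terms are bounded on the circle
by the summable family `‖fₘ‖ rᵐ ‖gₙ‖ (‖z‖/r)ⁿ / r`. Integrating termwise, `∮ w^k dw = 2πi [k = -1]`
keeps only the diagonal `m = n`, which sums to `2πi ∑ fₙ gₙ zⁿ`.
-/

open MeasureTheory Metric Complex Filter Real

theorem summable_norm_mul_pow_of_lt {f : ℕ → ℂ} {R s : ℝ}
    (hf : ∀ w : ℂ, ‖w‖ < R → Summable (fun n => f n * w ^ n)) (hs : 0 ≤ s) (hsR : s < R) :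
    Summable (fun n => ‖f n‖ * s ^ n) := by
  obtain ⟨t, hst, htR⟩ := exists_between hsR
  have ht : 0 < t := hs.trans_lt hst
  have hbounded : (fun n => f n * (t : ℂ) ^ n) =O[atTop] fun n => ((n ^ 0 : ℕ) : ℂ) := by
    simpa using (hf t (by simpa [abs_of_pos ht] using htR)).tendsto_atTop_zero.isBigO_one ℂ
  have hratio : ‖((s / t : ℝ) : ℂ)‖ < 1 := by
    rw [norm_real, norm_of_nonneg (by positivity), div_lt_one ht]
    exact hst
  refine (summable_norm_mul_geometric_of_norm_lt_one' hratio hbounded).congr fun n => ?_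
  simp only [norm_mul, norm_pow, norm_real, norm_of_nonneg ht.le, norm_of_nonneg hs, div_pow,
    Complex.norm_div, ofReal_div]
  field_simp

theorem circleIntegral.hasSum_of_summable_bound {ι E : Type*} [Countable ι] [NormedAddCommGroup E]
    [NormedSpace ℂ E] {F : ι → ℂ → E} {G : ℂ → E} {c : ℂ} {R : ℝ} {b : ι → ℝ}
    (hF : ∀ i, ContinuousOn (F i) (sphere c |R|)) (hb : Summable b)
    (hbound : ∀ i, ∀ w ∈ sphere c |R|, ‖F i w‖ ≤ b i)
    (hG : ∀ w ∈ sphere c |R|, HasSum (fun i => F i w) (G w)) :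
    HasSum (fun i => ∮ w in C(c, R), F i w) (∮ w in C(c, R), G w) := by
  refine intervalIntegral.hasSum_integral_of_dominated_convergence (fun i _ => |R| * b i)
    (fun i => ?_) (fun i => ?_) (ae_of_all _ fun _ _ => hb.mul_left |R|) intervalIntegrable_const
    (ae_of_all _ fun θ _ => (hG _ (circleMap_mem_sphere' c R θ)).const_smul _)
  · simp only [deriv_circleMap]
    exact Continuous.aestronglyMeasurable <| ((continuous_circleMap 0 R).mul continuous_const).smul
      ((hF i).comp_continuous (continuous_circleMap c R) (circleMap_mem_sphere' c R))
  · refine ae_of_all _ fun θ _ => ?_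
    rw [deriv_circleMap, norm_smul, norm_mul, norm_I, mul_one, norm_circleMap_zero]
    exact mul_le_mul_of_nonneg_left (hbound i _ (circleMap_mem_sphere' c R θ)) (abs_nonneg R)

theorem circleIntegral.integral_sub_center_zpow (c : ℂ) {R : ℝ} (hR : R ≠ 0) (k : ℤ) :
    (∮ z in C(c, R), (z - c) ^ k) = if k = -1 then 2 * π * I else 0 := by
  split_ifs with hk
  · simpa [hk] using integral_sub_center_inv c hR
  · exact integral_sub_zpow_of_ne hk c c R

noncomputable def hadamardIntegrandTerm (f g : ℕ → ℂ) (z : ℂ) (p : ℕ × ℕ) (w : ℂ) : ℂ :=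
  f p.1 * g p.2 * z ^ p.2 * w ^ ((p.1 : ℤ) - p.2 - 1)

section
variable {f g : ℕ → ℂ} {z : ℂ}

theorem hadamardIntegrandTerm_eq {w : ℂ} (hw : w ≠ 0) (p : ℕ × ℕ) :
    hadamardIntegrandTerm f g z p w = f p.1 * w ^ p.1 * (g p.2 * (z / w) ^ p.2) / w := by
  rw [hadamardIntegrandTerm, zpow_sub₀ hw, zpow_sub₀ hw, zpow_natCast, zpow_natCast, zpow_one,
    div_pow]
  field_simp

theorem hasSum_hadamardIntegrandTerm {w : ℂ} (hw : w ≠ 0)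
    (hf : Summable fun m => ‖f m * w ^ m‖) (hg : Summable fun n => ‖g n * (z / w) ^ n‖) :
    HasSum (fun p => hadamardIntegrandTerm f g z p w)
      ((∑' m, f m * w ^ m) * (∑' n, g n * (z / w) ^ n) / w) := by
  rw [tsum_mul_tsum_of_summable_norm hf hg, funext (hadamardIntegrandTerm_eq hw)]
  exact (summable_mul_of_summable_norm hf hg).hasSum.div_const w

theorem circleIntegral_hadamardIntegrandTerm {R : ℝ} (hR : R ≠ 0) (p : ℕ × ℕ) :
    (∮ w in C(0, R), hadamardIntegrandTerm f g z p w) =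
      if p.1 = p.2 then 2 * π * I * (f p.1 * g p.1 * z ^ p.1) else 0 := by
  obtain ⟨m, n⟩ := p
  have hk : ((m : ℤ) - n - 1 = -1) ↔ m = n := by omega
  have hzpow := circleIntegral.integral_sub_center_zpow 0 hR ((m : ℤ) - n - 1)
  simp only [sub_zero, hk] at hzpow
  simp only [hadamardIntegrandTerm, circleIntegral.integral_const_mul, hzpow]
  split_ifs with hmn
  · subst hmn
    ring
  · exact mul_zero _

theorem hasSum_circleIntegral_hadamard {r : ℝ} (hr : 0 < r)
    (hf : Summable fun m => ‖f m‖ * r ^ m) (hg : Summable fun n => ‖g n‖ * (‖z‖ / r) ^ n) :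
    HasSum (fun n => 2 * π * I * (f n * g n * z ^ n))
      (∮ w in C(0, r), (∑' m, f m * w ^ m) * (∑' n, g n * (z / w) ^ n) / w) := by
  have hsphere : ∀ w ∈ sphere (0 : ℂ) |r|, w ≠ 0 ∧ ‖w‖ = r := fun w hw => by
    rw [mem_sphere_zero_iff_norm, abs_of_pos hr] at hw
    exact ⟨norm_ne_zero_iff.mp (hw ▸ hr.ne'), hw⟩
  have hnorm : ∀ w ∈ sphere (0 : ℂ) |r|, ∀ p : ℕ × ℕ, ‖hadamardIntegrandTerm f g z p w‖ =
      ‖f p.1‖ * r ^ p.1 * (‖g p.2‖ * (‖z‖ / r) ^ p.2) / r := fun w hw p => by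
    obtain ⟨hw0, rfl⟩ := hsphere w hw
    simp only [hadamardIntegrandTerm_eq hw0, norm_div, norm_mul, norm_pow]
  have hsum := circleIntegral.hasSum_of_summable_bound (F := hadamardIntegrandTerm f g z)
    (G := fun w => (∑' m, f m * w ^ m) * (∑' n, g n * (z / w) ^ n) / w)
    (fun p => continuousOn_const.mul (continuousOn_id.zpow₀ _ fun w hw => .inl (hsphere w hw).1))
    ((hf.mul_of_nonneg hg (fun _ => by positivity) fun _ => by positivity).div_const r)
    (fun p w hw => (hnorm w hw p).le) fun w hw => ?_
  · simp only [circleIntegral_hadamardIntegrandTerm hr.ne'] at hsum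
    refine ((Function.Injective.hasSum_iff (g := fun n => (n, n)) ?_ ?_).mpr hsum).congr_fun ?_
    · exact fun m n h => congrArg Prod.fst h
    · rintro ⟨m, n⟩ hmn
      exact if_neg fun (h : m = n) => hmn ⟨m, by rw [h]⟩
    · intro n
      simp
  · obtain ⟨hw0, hwr⟩ := hsphere w hw
    refine hasSum_hadamardIntegrandTerm hw0 ?_ ?_
    · simpa [hwr] using hf
    · simpa [hwr] using hg
end

theorem hadamard_product_contour_general (f g : ℕ → ℂ) (Rf Rg r : ℝ)
    (hf : ∀ w : ℂ, ‖w‖ < Rf → Summable (fun n => f n * w ^ n))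
    (hg : ∀ w : ℂ, ‖w‖ < Rg → Summable (fun n => g n * w ^ n))
    (hr : 0 < r) (hrRf : r < Rf) (z : ℂ) (hz : ‖z‖ < r * Rg) :
    Summable (fun n => f n * g n * z ^ n) ∧
    ∑' n, f n * g n * z ^ n =
      (2 * Real.pi * Complex.I)⁻¹ *
        ∮ w in C(0, r), (∑' n, f n * w ^ n) * (∑' n, g n * (z / w) ^ n) / w := by
  have hzr : ‖z‖ / r < Rg := by rwa [div_lt_iff₀ hr, mul_comm]
  have hsum := (hasSum_circleIntegral_hadamard hr (summable_norm_mul_pow_of_lt hf hr.le hrRf)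
    (summable_norm_mul_pow_of_lt hg (by positivity) hzr)).mul_left (2 * π * I)⁻¹
  have h2πI : (2 * π * I : ℂ) ≠ 0 := by simp [pi_ne_zero, I_ne_zero]
  simp only [inv_mul_cancel_left₀ h2πI] at hsum
  exact ⟨hsum.summable, hsum.tsum_eq⟩

theorem hadamard_product_contour (f g : ℕ → ℂ) (Rf Rg r : ℝ) (hRf : 0 < Rf) (hRg : 0 < Rg)
    (hf : ∀ w : ℂ, ‖w‖ < Rf → Summable (fun n => f n * w ^ n))
    (hg : ∀ w : ℂ, ‖w‖ < Rg → Summable (fun n => g n * w ^ n))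
    (hr : 0 < r) (hrRf : r < Rf) (z : ℂ) (hz : ‖z‖ < r * Rg) :
    Summable (fun n => f n * g n * z ^ n) ∧
    ∑' n, f n * g n * z ^ n =
      (2 * Real.pi * Complex.I)⁻¹ *
        ∮ w in C(0, r), (∑' n, f n * w ^ n) * (∑' n, g n * (z / w) ^ n) / w :=
  hadamard_product_contour_general f g Rf Rg r hf hg hr hrRf z hz
end

section
/- Let H₁, H₂ be Hilbert spaces and P : H₁ → H₂ a bounded operator such that P*P and PP* have discrete spectrum with finite-dimensional eigenspaces and the heat traces Tr(exp(-tP*P)), Tr(exp(-tPP*)) are finite for all t > 0. Then for every t > 0, Tr(exp(-tP*P)) − Tr(exp(-tPP*)) = dim ker P − dim ker P* (the McKean–Singer formula). -/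
/-!
For a symmetric operator diagonal in a Hilbert basis, the `λ`-eigenspace is spanned by the basis
vectors with eigenvalue `λ`; summability of the heat trace makes every multiplicity finite, and the
multiplicity is the dimension of the eigenspace. For `λ ≠ 0`, `P` maps the `λ`-eigenspace of
`P*P` injectively into that of `PP*` and `P*` maps back, so nonzero eigenvalues have the same
multiplicities. A multiplicity-preserving bijection then cancels the nonzero terms of the two heat
traces, leaving the multiplicities of `0`, which are `dim ker P*P = dim ker P` and
`dim ker PP* = dim ker P*`.
-/

open ContinuousLinearMap Module Module.End Submodule
open scoped InnerProductSpace

theorem Summable.finite_preimage_singleton {ι α G : Type*} [AddCommGroup G] [TopologicalSpace G]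
    [IsTopologicalAddGroup G] [T1Space G] {f : α → G} {μ : ι → α} (hsum : Summable (f ∘ μ))
    {l : α} (hl : f l ≠ 0) : (μ ⁻¹' {l}).Finite := by
  have h := Filter.eventually_cofinite.mp (hsum.tendsto_cofinite_zero.eventually_ne hl.symm)
  exact h.subset fun i (hi : μ i = l) => not_not.mpr (congrArg f hi)

section Fibers

variable {ι κ α : Type*} {μ : ι → α} {ν : κ → α} {a : α}

theorem exists_equiv_compl_preimage_singleton (hμ : ∀ l, (μ ⁻¹' {l}).Finite)
    (hν : ∀ l, (ν ⁻¹' {l}).Finite)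
    (hcard : ∀ l ≠ a, Nat.card (μ ⁻¹' {l}) = Nat.card (ν ⁻¹' {l})) :
    ∃ e : ↥(μ ⁻¹' {a})ᶜ ≃ ↥(ν ⁻¹' {a})ᶜ, ∀ x, ν (e x) = μ x := by
  have fibers : ∀ l, {x : ↥(μ ⁻¹' {a})ᶜ // μ x = l} ≃ {y : ↥(ν ⁻¹' {a})ᶜ // ν y = l} := by
    intro l
    by_cases hl : l = a
    · subst hl
      have : IsEmpty {x : ↥(μ ⁻¹' {l})ᶜ // μ x = l} := ⟨fun x => x.1.2 x.2⟩
      have : IsEmpty {y : ↥(ν ⁻¹' {l})ᶜ // ν y = l} := ⟨fun y => y.1.2 y.2⟩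
      exact Equiv.equivOfIsEmpty _ _
    · have := (hμ l).to_subtype
      have := (hν l).to_subtype
      have e₁ : {x : ↥(μ ⁻¹' {a})ᶜ // μ x = l} ≃ μ ⁻¹' {l} :=
        Equiv.subtypeSubtypeEquivSubtype fun {i} (h : μ i = l) h' => hl (h.symm.trans h')
      have e₂ : {y : ↥(ν ⁻¹' {a})ᶜ // ν y = l} ≃ ν ⁻¹' {l} :=
        Equiv.subtypeSubtypeEquivSubtype fun {j} (h : ν j = l) h' => hl (h.symm.trans h')
      exact e₁.trans ((Finite.card_eq.mp (hcard l hl)).some.trans e₂.symm)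
  exact ⟨Equiv.ofFiberEquiv fibers, Equiv.ofFiberEquiv_map fibers⟩

variable {G : Type*} [AddCommGroup G] [UniformSpace G] [IsUniformAddGroup G] [CompleteSpace G]
  [T2Space G] {f : α → G}

theorem tsum_comp_eq_card_smul_add (hsum : Summable (f ∘ μ)) (a : α) :
    ∑' i, f (μ i) = Nat.card (μ ⁻¹' {a}) • f a + ∑' i : ↥(μ ⁻¹' {a})ᶜ, f (μ i) := by
  refine (hsum.tsum_subtype_add_tsum_subtype_compl (μ ⁻¹' {a})).symm.trans ?_
  rw [← tsum_const]
  congr 1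
  exact tsum_congr fun i => congrArg f i.2

theorem tsum_comp_sub_tsum_comp_of_card_preimage_eq (hsumμ : Summable (f ∘ μ))
    (hsumν : Summable (f ∘ ν)) (hμ : ∀ l, (μ ⁻¹' {l}).Finite) (hν : ∀ l, (ν ⁻¹' {l}).Finite)
    (hcard : ∀ l ≠ a, Nat.card (μ ⁻¹' {l}) = Nat.card (ν ⁻¹' {l})) :
    ∑' i, f (μ i) - ∑' j, f (ν j) =
      Nat.card (μ ⁻¹' {a}) • f a - Nat.card (ν ⁻¹' {a}) • f a := by
  obtain ⟨e, he⟩ := exists_equiv_compl_preimage_singleton hμ hν hcard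
  have hrest : ∑' i : ↥(μ ⁻¹' {a})ᶜ, f (μ i) = ∑' j : ↥(ν ⁻¹' {a})ᶜ, f (ν j) := by
    simp_rw [← he]
    exact e.tsum_eq fun j => f (ν j)
  rw [tsum_comp_eq_card_smul_add hsumμ a, tsum_comp_eq_card_smul_add hsumν a, hrest]
  abel

end Fibers

section Spectral

variable {𝕜 E F ι κ : Type*} [RCLike 𝕜]
  [NormedAddCommGroup E] [InnerProductSpace 𝕜 E] [NormedAddCommGroup F] [InnerProductSpace 𝕜 F]

namespace HilbertBasis

variable {T : E →ₗ[𝕜] E} (b : HilbertBasis ι 𝕜 E) {μ : ι → ℝ} {l : ℝ}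

theorem eigenspace_eq_span (hT : T.IsSymmetric) (hμ : ∀ i, T (b i) = (μ i : 𝕜) • b i)
    (hfin : (μ ⁻¹' {l}).Finite) :
    eigenspace T (l : 𝕜) = span 𝕜 (b '' (μ ⁻¹' {l})) := by
  have hb : ∀ i, b i ∈ eigenspace T (μ i : 𝕜) := fun i => mem_eigenspace_iff.mpr (hμ i)
  refine le_antisymm (fun x hx => ?_) (span_le.mpr ?_)
  · have hcoeff : ∀ i ∉ hfin.toFinset, b.repr x i • b i = 0 := fun i hi => by
      have hne : (μ i : 𝕜) ≠ l := by exact_mod_cast (by simpa using hi : μ i ≠ l)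
      have horth : ⟪b i, x⟫_𝕜 = 0 := hT.orthogonalFamily_eigenspaces hne ⟨b i, hb i⟩ ⟨x, hx⟩
      rw [b.repr_apply_apply, horth, zero_smul]
    rw [(b.hasSum_repr x).unique (hasSum_sum_of_ne_finset_zero hcoeff)]
    exact sum_mem fun i hi => smul_mem _ _ (subset_span ⟨i, by simpa using hi, rfl⟩)
  · rintro _ ⟨i, rfl, rfl⟩
    exact hb i

theorem finiteDimensional_eigenspace (hT : T.IsSymmetric) (hμ : ∀ i, T (b i) = (μ i : 𝕜) • b i)
    (hfin : (μ ⁻¹' {l}).Finite) :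
    FiniteDimensional 𝕜 (eigenspace T (l : 𝕜)) :=
  b.eigenspace_eq_span hT hμ hfin ▸ FiniteDimensional.span_of_finite 𝕜 (hfin.image b)

theorem finrank_eigenspace (hT : T.IsSymmetric) (hμ : ∀ i, T (b i) = (μ i : 𝕜) • b i)
    (hfin : (μ ⁻¹' {l}).Finite) :
    finrank 𝕜 (eigenspace T (l : 𝕜)) = Nat.card (μ ⁻¹' {l}) := by
  have := hfin.fintype
  rw [b.eigenspace_eq_span hT hμ hfin, Set.image_eq_range, Nat.card_eq_fintype_card]
  exact finrank_span_eq_card (b.orthonormal.comp _ Subtype.val_injective).linearIndependent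

end HilbertBasis

theorem LinearMap.finrank_eigenspace_comp_le {K M N : Type*} [Field K] [AddCommGroup M]
    [Module K M] [AddCommGroup N] [Module K N] (A : M →ₗ[K] N) (B : N →ₗ[K] M) {l : K}
    (hl : l ≠ 0) [FiniteDimensional K (eigenspace (A ∘ₗ B) l)] :
    finrank K (eigenspace (B ∘ₗ A) l) ≤ finrank K (eigenspace (A ∘ₗ B) l) := by
  have hmaps : ∀ x ∈ eigenspace (B ∘ₗ A) l, A x ∈ eigenspace (A ∘ₗ B) l := fun x hx => by
    rw [mem_eigenspace_iff] at hx ⊢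
    simpa using congrArg A hx
  refine LinearMap.finrank_le_finrank_of_injective (f := A.restrict hmaps) ?_
  refine (injective_iff_map_eq_zero _).mpr fun ⟨x, hx⟩ hAx => ?_
  replace hAx : A x = 0 := congrArg Subtype.val hAx
  have hlx : l • x = 0 := by
    rw [← mem_eigenspace_iff.mp hx, comp_apply, hAx, map_zero]
  exact Subtype.ext ((smul_eq_zero.mp hlx).resolve_left hl)

variable [CompleteSpace E] [CompleteSpace F]

theorem ContinuousLinearMap.isSymmetric_adjoint_comp_self (Q : E →L[𝕜] F) :
    ((adjoint Q : F →ₗ[𝕜] E) ∘ₗ (Q : E →ₗ[𝕜] F)).IsSymmetric := fun x y => by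
  simp [adjoint_inner_left, adjoint_inner_right]

variable {b₁ : HilbertBasis ι 𝕜 E} {μ : ι → ℝ} {b₂ : HilbertBasis κ 𝕜 F} {ν : κ → ℝ}

theorem ContinuousLinearMap.finrank_ker_eq_card_preimage_zero (Q : E →L[𝕜] F)
    (hμ : ∀ i, (adjoint Q ∘L Q) (b₁ i) = (μ i : 𝕜) • b₁ i) (hfin : (μ ⁻¹' {0}).Finite) :
    finrank 𝕜 (LinearMap.ker (Q : E →ₗ[𝕜] F)) = Nat.card (μ ⁻¹' {0}) := by
  rw [← Q.ker_adjoint_comp_self, ← eigenspace_zero, ← RCLike.ofReal_zero]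
  exact b₁.finrank_eigenspace Q.isSymmetric_adjoint_comp_self hμ hfin

theorem ContinuousLinearMap.card_preimage_eq_of_ne_zero (Q : E →L[𝕜] F)
    (hμ : ∀ i, (adjoint Q ∘L Q) (b₁ i) = (μ i : 𝕜) • b₁ i)
    (hν : ∀ j, (Q ∘L adjoint Q) (b₂ j) = (ν j : 𝕜) • b₂ j)
    {l : ℝ} (hl : l ≠ 0) (hμl : (μ ⁻¹' {l}).Finite) (hνl : (ν ⁻¹' {l}).Finite) :
    Nat.card (μ ⁻¹' {l}) = Nat.card (ν ⁻¹' {l}) := by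
  have hsymm₁ := Q.isSymmetric_adjoint_comp_self
  have hsymm₂ : ((Q : E →ₗ[𝕜] F) ∘ₗ (adjoint Q : F →ₗ[𝕜] E)).IsSymmetric := by
    simpa only [adjoint_adjoint] using (adjoint Q).isSymmetric_adjoint_comp_self
  have := b₁.finiteDimensional_eigenspace hsymm₁ hμ hμl
  have := b₂.finiteDimensional_eigenspace hsymm₂ hν hνl
  have hl' : (l : 𝕜) ≠ 0 := by exact_mod_cast hl
  rw [← b₁.finrank_eigenspace hsymm₁ hμ hμl, ← b₂.finrank_eigenspace hsymm₂ hν hνl]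
  exact le_antisymm (LinearMap.finrank_eigenspace_comp_le _ _ hl')
    (LinearMap.finrank_eigenspace_comp_le _ _ hl')

end Spectral

theorem mckean_singer_general {H₁ H₂ : Type*}
    [NormedAddCommGroup H₁] [InnerProductSpace ℂ H₁] [CompleteSpace H₁]
    [NormedAddCommGroup H₂] [InnerProductSpace ℂ H₂] [CompleteSpace H₂]
    {I J : Type*} (P : H₁ →L[ℂ] H₂)
    (b₁ : HilbertBasis I ℂ H₁) (μ : I → ℝ)
    (hμ : ∀ i, (adjoint P ∘L P) (b₁ i) = (μ i : ℂ) • b₁ i)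
    (b₂ : HilbertBasis J ℂ H₂) (ν : J → ℝ)
    (hν : ∀ j, (P ∘L adjoint P) (b₂ j) = (ν j : ℂ) • b₂ j)
    (t : ℝ)
    (hsum₁ : Summable fun i => Real.exp (-t * μ i))
    (hsum₂ : Summable fun j => Real.exp (-t * ν j)) :
    (∑' i, Real.exp (-t * μ i)) - (∑' j, Real.exp (-t * ν j)) =
      (Module.finrank ℂ (LinearMap.ker (P : H₁ →ₗ[ℂ] H₂)) : ℝ) -
        (Module.finrank ℂ (LinearMap.ker (adjoint P : H₂ →ₗ[ℂ] H₁)) : ℝ) := by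
  set f : ℝ → ℝ := fun x => Real.exp (-t * x)
  have hfin₁ : ∀ l, (μ ⁻¹' {l}).Finite := fun l =>
    Summable.finite_preimage_singleton (f := f) hsum₁ (Real.exp_ne_zero _)
  have hfin₂ : ∀ l, (ν ⁻¹' {l}).Finite := fun l =>
    Summable.finite_preimage_singleton (f := f) hsum₂ (Real.exp_ne_zero _)
  have hν' : ∀ j, (adjoint (adjoint P) ∘L adjoint P) (b₂ j) = (ν j : ℂ) • b₂ j := by
    simpa only [adjoint_adjoint] using hν
  rw [P.finrank_ker_eq_card_preimage_zero hμ (hfin₁ 0),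
    (adjoint P).finrank_ker_eq_card_preimage_zero hν' (hfin₂ 0)]
  have key := tsum_comp_sub_tsum_comp_of_card_preimage_eq (f := f) (a := 0)
    hsum₁ hsum₂ hfin₁ hfin₂ fun l hl => P.card_preimage_eq_of_ne_zero hμ hν hl (hfin₁ l) (hfin₂ l)
  simpa only [f, mul_zero, Real.exp_zero, nsmul_eq_mul, mul_one] using key

theorem mckean_singer {H₁ H₂ : Type*}
    [NormedAddCommGroup H₁] [InnerProductSpace ℂ H₁] [CompleteSpace H₁]
    [NormedAddCommGroup H₂] [InnerProductSpace ℂ H₂] [CompleteSpace H₂]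
    {I J : Type*} (P : H₁ →L[ℂ] H₂)
    (b₁ : HilbertBasis I ℂ H₁) (μ : I → ℝ)
    (hμ : ∀ i, (adjoint P ∘L P) (b₁ i) = (μ i : ℂ) • b₁ i)
    (b₂ : HilbertBasis J ℂ H₂) (ν : J → ℝ)
    (hν : ∀ j, (P ∘L adjoint P) (b₂ j) = (ν j : ℂ) • b₂ j)
    [FiniteDimensional ℂ (LinearMap.ker (P : H₁ →ₗ[ℂ] H₂))]
    [FiniteDimensional ℂ (LinearMap.ker (adjoint P : H₂ →ₗ[ℂ] H₁))]
    (t : ℝ) (ht : 0 < t)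
    (hsum₁ : Summable fun i => Real.exp (-t * μ i))
    (hsum₂ : Summable fun j => Real.exp (-t * ν j)) :
    (∑' i, Real.exp (-t * μ i)) - (∑' j, Real.exp (-t * ν j)) =
      (Module.finrank ℂ (LinearMap.ker (P : H₁ →ₗ[ℂ] H₂)) : ℝ) -
        (Module.finrank ℂ (LinearMap.ker (adjoint P : H₂ →ₗ[ℂ] H₁)) : ℝ) :=
  mckean_singer_general P b₁ μ hμ b₂ ν hν t hsum₁ hsum₂
end
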